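/- Let k be odd and ∂_k the operator on the 2^k-dimensional Z/2 space CF(k) defined by the sum of single sign flips plus the total sign flip. Let d_k = dim_{Z/2} (ker ∂_k / im ∂_k). Then d_{k+2} = 2 · d_k for all odd k ≥ 3 with the recursion starting from d_3 = 4; consequently d_{2n-1} = 2^n for n ≥ 2. -/

import Mathlib

open Finset

abbrev SV (k : ℕ) := Fin k → Bool
abbrev CFR (R : Type) [CommRing R] (k : ℕ) := SV k → R
abbrev CF (k : ℕ) := CFR (ZMod 2) k

def sflip {k : ℕ} (i : Fin k) (ε : SV k) : SV k := Function.update ε i (!ε i)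
def flipAll {k : ℕ} (ε : SV k) : SV k := fun j => !ε j

def bdryR (R : Type) [CommRing R] (k : ℕ) : CFR R k →ₗ[R] CFR R k where
  toFun x := fun ε => (∑ i : Fin k, x (sflip i ε)) + x (flipAll ε)
  map_add' x y := by funext ε; simp only [Pi.add_apply, Finset.sum_add_distrib]; ring
  map_smul' c x := by
    funext ε
    show (∑ i, (c • x) (sflip i ε)) + (c • x) (flipAll ε)
        = c * ((∑ i, x (sflip i ε)) + x (flipAll ε))
    simp only [Pi.smul_apply, smul_eq_mul]
    rw [mul_add, Finset.mul_sum]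

abbrev bdry (k : ℕ) : CF k →ₗ[ZMod 2] CF k := bdryR (ZMod 2) k

def eta (k : ℕ) : CF k →ₗ[ZMod 2] CF k where
  toFun x := fun ε => x (flipAll ε)
  map_add' x y := by funext ε; simp
  map_smul' c x := by funext ε; simp

def pre (k : ℕ) (a b : Bool) : CF k →ₗ[ZMod 2] CF (k+2) where
  toFun x := fun ε => if ε 0 = a ∧ ε 1 = b then x (fun i => ε i.succ.succ) else 0
  map_add' x y := by funext ε; by_cases h : ε 0 = a ∧ ε 1 = b <;> simp [h]
  map_smul' c x := by funext ε; by_cases h : ε 0 = a ∧ ε 1 = b <;> simp [h]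

def proj (k : ℕ) : CF (k+2) →ₗ[ZMod 2] CF k where
  toFun x := fun δ => ∑ a : Bool, ∑ b : Bool, x (Fin.cons a (Fin.cons b δ))
  map_add' x y := by funext δ; simp [Finset.sum_add_distrib]
  map_smul' c x := by funext δ; simp [Finset.mul_sum]; ring

noncomputable def homDim (k : ℕ) : ℕ :=
  Module.finrank (ZMod 2)
    (LinearMap.ker (bdry k) ⧸
      Submodule.comap (LinearMap.ker (bdry k)).subtype (LinearMap.range (bdry k)))

-- ============ auxiliary development ============
section Aux
variable {k : ℕ}

lemma h2 : (2 : ZMod 2) = 0 := rfl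

@[simp] lemma flipAll_flipAll (ε : SV k) : flipAll (flipAll ε) = ε := by
  funext j; simp [flipAll]

lemma sflip_sflip (i : Fin k) (ε : SV k) : sflip i (sflip i ε) = ε := by
  funext j
  by_cases h : j = i
  · subst h; simp [sflip, Function.update]
  · simp [sflip, Function.update_of_ne h]

@[simp] lemma flipAll_sflip (i : Fin k) (ε : SV k) :
    flipAll (sflip i ε) = sflip i (flipAll ε) := by
  funext j
  by_cases h : j = i <;> simp [flipAll, sflip, Function.update, h]

lemma bdry_apply (x : CF k) (ε : SV k) :
    bdry k x ε = (∑ i : Fin k, x (sflip i ε)) + x (flipAll ε) := rfl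

lemma eta_apply (x : CF k) (ε : SV k) : eta k x ε = x (flipAll ε) := rfl

def cn {k : ℕ} (a b : Bool) (δ : SV k) : SV (k+2) := Fin.cons a (Fin.cons b δ)

@[simp] lemma cn_zero (a b : Bool) (δ : SV k) : (cn a b δ) 0 = a := rfl
@[simp] lemma cn_one (a b : Bool) (δ : SV k) : (cn a b δ) 1 = b := by
  rw [show (1 : Fin (k+2)) = Fin.succ 0 from (Fin.succ_zero_eq_one).symm]
  simp [cn]
@[simp] lemma cn_succ_succ (a b : Bool) (δ : SV k) (i : Fin k) :
    (cn a b δ) i.succ.succ = δ i := by simp [cn]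

def tl {k : ℕ} (ε : SV (k+2)) : SV k := fun i => ε i.succ.succ

@[simp] lemma tl_cn (a b : Bool) (δ : SV k) : tl (cn a b δ) = δ := by
  funext i; simp [tl]

lemma cn_eta (ε : SV (k+2)) : cn (ε 0) (ε 1) (tl ε) = ε := by
  funext j
  refine Fin.cases rfl (fun i => ?_) j
  refine Fin.cases ?_ (fun i' => ?_) i
  · simp [cn, Fin.succ_zero_eq_one]
  · simp [cn, tl]

@[simp] lemma sflip_cn_zero (a b : Bool) (δ : SV k) :
    sflip 0 (cn a b δ) = cn (!a) b δ := by
  unfold sflip cn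
  simp only [Fin.cons_zero, Fin.update_cons_zero]

@[simp] lemma sflip_cn_one (a b : Bool) (δ : SV k) :
    sflip 1 (cn a b δ) = cn a (!b) δ := by
  unfold sflip cn
  rw [← Fin.succ_zero_eq_one]
  simp only [Fin.cons_succ, Fin.cons_zero, ← Fin.cons_update, Fin.update_cons_zero]

@[simp] lemma sflip_cn_ss (a b : Bool) (δ : SV k) (i : Fin k) :
    sflip i.succ.succ (cn a b δ) = cn a b (sflip i δ) := by
  unfold sflip cn
  simp only [Fin.cons_succ, ← Fin.cons_update]

@[simp] lemma flipAll_cn (a b : Bool) (δ : SV k) :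
    flipAll (cn a b δ) = cn (!a) (!b) (flipAll δ) := by
  funext j
  refine Fin.cases rfl (fun i => ?_) j
  refine Fin.cases ?_ (fun i' => ?_) i
  · simp [flipAll, cn, Fin.succ_zero_eq_one]
  · simp [flipAll, cn]

end Aux
section Maps
variable {k : ℕ}
open LinearMap

lemma bdry_cn (a b : Bool) (δ : SV k) (x : CF (k+2)) :
    bdry (k+2) x (cn a b δ) =
      x (cn (!a) b δ) + x (cn a (!b) δ) + (∑ i : Fin k, x (cn a b (sflip i δ)))
        + x (cn (!a) (!b) (flipAll δ)) := by
  rw [bdry_apply, Fin.sum_univ_succ, Fin.sum_univ_succ]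
  simp only [sflip_cn_zero, Fin.succ_zero_eq_one, sflip_cn_one, sflip_cn_ss, flipAll_cn]
  ring

/-- slot extraction -/
def sl (k : ℕ) (a b : Bool) : CF (k+2) →ₗ[ZMod 2] CF k where
  toFun x := fun δ => x (cn a b δ)
  map_add' x y := rfl
  map_smul' c x := rfl

lemma sl_apply (a b : Bool) (x : CF (k+2)) (δ : SV k) : sl k a b x δ = x (cn a b δ) := rfl

set_option maxHeartbeats 1000000 in
def Emap (k : ℕ) : ((CF k × CF k) × (CF k × CF k)) →ₗ[ZMod 2] CF (k+2) :=
  (pre k true false).comp ((fst _ _ _).comp (fst _ _ _))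
  + (pre k true true).comp ((eta k).comp ((fst _ _ _).comp (fst _ _ _)))
  + (pre k false true).comp ((snd _ _ _).comp (fst _ _ _))
  + (pre k true true).comp ((eta k).comp ((snd _ _ _).comp (fst _ _ _)))
  + (pre k false false).comp ((fst _ _ _).comp (snd _ _ _))
  + (pre k true false).comp ((eta k).comp ((fst _ _ _).comp (snd _ _ _)))
  + (pre k false true).comp ((eta k).comp ((fst _ _ _).comp (snd _ _ _)))
  + (pre k true true).comp ((fst _ _ _).comp (snd _ _ _))
  + (pre k true true).comp ((snd _ _ _).comp (snd _ _ _))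

lemma pre_cn (a b a' b' : Bool) (x : CF k) (δ : SV k) :
    pre k a' b' x (cn a b δ) = if a = a' ∧ b = b' then x δ else 0 := by
  show (if (cn a b δ) 0 = a' ∧ (cn a b δ) 1 = b' then x (fun i => (cn a b δ) i.succ.succ) else 0) = _
  simp only [cn_zero, cn_one, cn_succ_succ]

@[simp] lemma Emap_ff (z : (CF k × CF k) × (CF k × CF k)) (δ : SV k) :
    Emap k z (cn false false δ) = z.2.1 δ := by
  simp [Emap, pre_cn, eta_apply]

@[simp] lemma Emap_tf (z : (CF k × CF k) × (CF k × CF k)) (δ : SV k) :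
    Emap k z (cn true false δ) = z.1.1 δ + z.2.1 (flipAll δ) := by
  simp [Emap, pre_cn, eta_apply]

@[simp] lemma Emap_ft (z : (CF k × CF k) × (CF k × CF k)) (δ : SV k) :
    Emap k z (cn false true δ) = z.1.2 δ + z.2.1 (flipAll δ) := by
  simp [Emap, pre_cn, eta_apply]

@[simp] lemma Emap_tt (z : (CF k × CF k) × (CF k × CF k)) (δ : SV k) :
    Emap k z (cn true true δ) = z.1.1 (flipAll δ) + z.1.2 (flipAll δ) + z.2.1 δ + z.2.2 δ := by
  simp [Emap, pre_cn, eta_apply]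

def E'map (k : ℕ) : CF (k+2) →ₗ[ZMod 2] ((CF k × CF k) × (CF k × CF k)) :=
  LinearMap.prod
    (LinearMap.prod (sl k true false + (eta k).comp (sl k false false))
                    (sl k false true + (eta k).comp (sl k false false)))
    (LinearMap.prod (sl k false false)
      (sl k true true + sl k false false + (eta k).comp (sl k true false)
        + (eta k).comp (sl k false true)))

def Kmap (k : ℕ) : (CF k × CF k) →ₗ[ZMod 2] (CF k × CF k) :=
  LinearMap.prod ((bdry k).comp (fst _ _ _) + (eta k).comp (snd _ _ _))
    ((bdry k).comp (snd _ _ _))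

def Theta (k : ℕ) : ((CF k × CF k) × (CF k × CF k)) →ₗ[ZMod 2] ((CF k × CF k) × (CF k × CF k)) :=
  ((bdry k).prodMap (bdry k)).prodMap (Kmap k)

lemma Theta_apply (z : (CF k × CF k) × (CF k × CF k)) :
    Theta k z = ((bdry k z.1.1, bdry k z.1.2), (bdry k z.2.1 + eta k z.2.2, bdry k z.2.2)) := rfl

lemma key (z : (CF k × CF k) × (CF k × CF k)) (a b : Bool) (δ : SV k) :
    bdry (k+2) (Emap k z) (cn a b δ) = Emap k (Theta k z) (cn a b δ) := by
  obtain ⟨⟨p, q⟩, r, s⟩ := z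
  rw [bdry_cn]
  cases a <;> cases b <;>
    simp only [Theta_apply, Emap_ff, Emap_tf, Emap_ft, Emap_tt, Bool.not_false, Bool.not_true,
      bdry_apply, eta_apply, Pi.add_apply, Finset.sum_add_distrib, flipAll_sflip,
      flipAll_flipAll]
  · linear_combination (p δ + q δ + r (flipAll δ)) * h2
  · linear_combination (r δ + p (flipAll δ)) * h2
  · linear_combination (r δ + q (flipAll δ)) * h2
  · linear_combination (r (flipAll δ) - s (flipAll δ)) * h2

end Maps
section Equiv
variable {k : ℕ}
open LinearMap Module

lemma ext_cn {x y : CF (k+2)} (h : ∀ a b δ, x (cn a b δ) = y (cn a b δ)) : x = y :=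
  funext fun ε => by have := h (ε 0) (ε 1) (tl ε); rwa [cn_eta] at this

lemma E'_E : (E'map k).comp (Emap k) = LinearMap.id := by
  refine LinearMap.ext fun z => ?_
  obtain ⟨⟨p, q⟩, r, s⟩ := z
  refine Prod.ext (Prod.ext ?_ ?_) (Prod.ext ?_ ?_) <;>
    (show _ = _
     funext δ
     simp only [E'map, LinearMap.comp_apply, LinearMap.prod_apply, Function.prod, LinearMap.add_apply,
       sl_apply, eta_apply, Emap_ff, Emap_tf, Emap_ft, Emap_tt, Pi.add_apply, flipAll_flipAll,
       LinearMap.id_coe, id_eq]) <;>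
    first
    | linear_combination (r (flipAll δ)) * h2
    | linear_combination (p (flipAll δ) + q (flipAll δ) + 2 * (r δ)) * h2

lemma E_E' : (Emap k).comp (E'map k) = LinearMap.id := by
  refine LinearMap.ext fun x => ext_cn fun a b δ => ?_
  have expand : ∀ a b δ, (Emap k) ((E'map k) x) (cn a b δ) = (Emap k) ((E'map k) x) (cn a b δ) := fun _ _ _ => rfl
  cases a <;> cases b <;>
    simp only [LinearMap.comp_apply, Emap_ff, Emap_tf, Emap_ft, Emap_tt, E'map,
      LinearMap.prod_apply, Function.prod, LinearMap.add_apply, sl_apply, eta_apply, Pi.add_apply,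
      flipAll_flipAll, LinearMap.id_coe, id_eq] <;>
    first
    | rfl
    | linear_combination (x (cn false false (flipAll δ))) * h2
    | linear_combination (x (cn true false (flipAll δ)) + x (cn false true (flipAll δ))
        + 2 * (x (cn false false δ))) * h2

lemma conj_comp : (bdry (k+2)).comp (Emap k) = (Emap k).comp (Theta k) :=
  LinearMap.ext fun z => ext_cn fun a b δ => key z a b δ

end Equiv
section Rank
variable {k : ℕ}
open LinearMap Module

/-- product of submodules is equivalent to product -/
def prodSubEquiv {R M N : Type*} [CommRing R] [AddCommGroup M] [Module R M]
    [AddCommGroup N] [Module R N] (p : Submodule R M) (q : Submodule R N) :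
    (p.prod q) ≃ₗ[R] (p × q) where
  toFun x := (⟨x.1.1, x.2.1⟩, ⟨x.1.2, x.2.2⟩)
  invFun x := ⟨(x.1.1, x.2.1), ⟨x.1.2, x.2.2⟩⟩
  map_add' _ _ := rfl
  map_smul' _ _ := rfl
  left_inv _ := rfl
  right_inv _ := rfl

lemma finrank_range_prodMap {R M N M' N' : Type*} [Field R] [AddCommGroup M] [Module R M]
    [AddCommGroup N] [Module R N] [AddCommGroup M'] [Module R M'] [AddCommGroup N'] [Module R N']
    [FiniteDimensional R M'] [FiniteDimensional R N']
    (f : M →ₗ[R] M') (g : N →ₗ[R] N') :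
    finrank R (LinearMap.range (f.prodMap g))
      = finrank R (LinearMap.range f) + finrank R (LinearMap.range g) := by
  have hr : LinearMap.range (f.prodMap g) = (LinearMap.range f).prod (LinearMap.range g) := by
    ext ⟨m, n⟩
    constructor
    · rintro ⟨⟨a, b⟩, h⟩
      simp only [LinearMap.prodMap_apply, Prod.ext_iff] at h
      exact ⟨⟨a, h.1⟩, ⟨b, h.2⟩⟩
    · rintro ⟨⟨a, ha⟩, ⟨b, hb⟩⟩; exact ⟨(a, b), by simp [LinearMap.prodMap_apply, ha, hb]⟩
  rw [hr, (prodSubEquiv _ _).finrank_eq, Module.finrank_prod]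

lemma eta_eta (x : CF k) : eta k (eta k x) = x := by
  funext δ; simp [eta_apply]

lemma bdry_eta (x : CF k) : bdry k (eta k x) = eta k (bdry k x) := by
  funext δ
  simp only [bdry_apply, eta_apply, flipAll_sflip, flipAll_flipAll]

lemma bdry_sq (hk : Odd k) (x : CF k) : bdry k (bdry k x) = 0 := by
  funext ε
  rw [bdry_apply]
  simp only [bdry_apply, Finset.sum_add_distrib, flipAll_sflip, flipAll_flipAll]
  have hdouble : ∑ i : Fin k, ∑ j : Fin k, x (sflip j (sflip i ε)) = (k : ℕ) • x ε := by
    rw [← Finset.sum_product']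
    rw [← Finset.diag_union_offDiag (univ : Finset (Fin k)),
      Finset.sum_union (Finset.disjoint_diag_offDiag _)]
    have hdiag : ∑ p ∈ (univ : Finset (Fin k)).diag, x (sflip p.2 (sflip p.1 ε))
        = ∑ p ∈ (univ : Finset (Fin k)).diag, x ε := by
      refine Finset.sum_congr rfl fun p hp => ?_
      rw [Finset.mem_diag] at hp
      obtain ⟨p1, p2⟩ := p
      obtain ⟨-, h⟩ := hp
      cases h
      rw [sflip_sflip]
    have hoff : ∑ p ∈ (univ : Finset (Fin k)).offDiag, x (sflip p.2 (sflip p.1 ε)) = 0 := by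
      refine Finset.sum_involution (fun p _ => p.swap) (fun p _ => ?_) (fun p hp h => ?_)
        (fun p hp => ?_) (fun p hp => rfl)
      · have hcomm : sflip p.2 (sflip p.1 ε) = sflip p.1 (sflip p.2 ε) := by
          rcases eq_or_ne p.1 p.2 with h | h
          · rw [h]
          · funext j
            by_cases h1 : j = p.1 <;> by_cases h2 : j = p.2 <;>
              simp [sflip, Function.update, h1, h2, h, h.symm] <;> subst h1 <;> simp_all
        simp only [Prod.fst_swap, Prod.snd_swap]
        rw [← hcomm]
        linear_combination (x (sflip p.2 (sflip p.1 ε))) * h2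
      · rw [Finset.mem_offDiag] at hp
        simp only [ne_eq, Prod.ext_iff, Prod.fst_swap, Prod.snd_swap, not_and]
        intro hh; exact absurd hh.symm hp.2.2
      · rw [Finset.mem_offDiag] at hp ⊢
        exact ⟨hp.2.1, hp.1, fun hh => hp.2.2 hh.symm⟩
    rw [hdiag, hoff, add_zero, Finset.sum_const, Finset.diag_card, Finset.card_univ,
      Fintype.card_fin]
  rw [hdouble]
  obtain ⟨m, rfl⟩ := hk
  show _ = (0 : CF _) ε
  rw [nsmul_eq_mul]
  push_cast
  show _ = (0 : ZMod 2)
  linear_combination ((m : ZMod 2) + 1) * (x ε) * h2 + (∑ i, x (sflip i (flipAll ε))) * h2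
end Rank
section Final
variable {k : ℕ}
open LinearMap Module

lemma add_self_cf (x : CF k) : x + x = 0 := by
  funext δ; show x δ + x δ = 0; linear_combination (x δ) * h2

lemma eq_of_add_eq_zero_cf {x y : CF k} (h : x + y = 0) : y = x := by
  funext δ
  have hδ : x δ + y δ = 0 := congrFun h δ
  linear_combination hδ - (x δ) * h2

lemma finrank_CF : finrank (ZMod 2) (CF k) = 2 ^ k := by
  rw [Module.finrank_pi]
  simp [Fintype.card_fun]

def Gmap (k : ℕ) : CF k →ₗ[ZMod 2] (CF k × CF k) :=
  LinearMap.prod LinearMap.id ((eta k).comp (bdry k))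

lemma ker_K (hk : Odd k) : ker (Kmap k) = range (Gmap k) := by
  ext ⟨r, s⟩
  constructor
  · intro h
    have h' : (Kmap k) (r, s) = 0 := h
    have h1 : bdry k r + eta k s = 0 := congrArg Prod.fst h'
    have h2' : eta k (bdry k r) + s = 0 := by
      have := congrArg (eta k) h1
      rwa [map_add, eta_eta, map_zero] at this
    exact ⟨r, Prod.ext rfl (eq_of_add_eq_zero_cf h2').symm⟩
  · rintro ⟨a, ha⟩
    show (Kmap k) (r, s) = 0
    rw [← ha]
    have c1 : bdry k a + eta k (eta k (bdry k a)) = 0 := by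
      rw [eta_eta]; exact add_self_cf _
    have c2 : bdry k (eta k (bdry k a)) = 0 := by
      rw [bdry_eta, bdry_sq hk, map_zero]
    exact Prod.ext c1 c2

set_option maxHeartbeats 1000000 in
set_option synthInstance.maxHeartbeats 400000 in
lemma rank_K (hk : Odd k) : finrank (ZMod 2) (range (Kmap k)) = 2 ^ k := by
  have hinj : Function.Injective (Gmap k) := fun a b hab => congrArg Prod.fst hab
  have h1 : finrank (ZMod 2) (ker (Kmap k)) = 2 ^ k := by
    rw [ker_K hk, LinearMap.finrank_range_of_inj hinj, finrank_CF]
  have h2' := LinearMap.finrank_range_add_finrank_ker (Kmap k)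
  rw [h1, Module.finrank_prod, finrank_CF] at h2'
  omega

lemma range_E'_top : range (E'map k) = ⊤ :=
  LinearMap.range_eq_top.mpr fun y =>
    ⟨Emap k y, by rw [← LinearMap.comp_apply, E'_E]; rfl⟩

noncomputable def Eequiv (k : ℕ) : ((CF k × CF k) × (CF k × CF k)) ≃ₗ[ZMod 2] CF (k+2) :=
  LinearEquiv.ofLinear (Emap k) (E'map k) E_E' E'_E

set_option maxHeartbeats 1000000 in
set_option synthInstance.maxHeartbeats 400000 in
lemma rank_rec (hk : Odd k) :
    finrank (ZMod 2) (range (bdry (k+2))) = 2 ^ k + 2 * finrank (ZMod 2) (range (bdry k)) := by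
  have hb : bdry (k+2) = ((Emap k).comp (Theta k)).comp (E'map k) := by
    rw [← conj_comp]
    rw [LinearMap.comp_assoc, E_E', LinearMap.comp_id]
  have hr1 : range (bdry (k+2)) = range ((Emap k).comp (Theta k)) := by
    rw [hb]; exact LinearMap.range_comp_of_range_eq_top _ range_E'_top
  have hr2 : range ((Emap k).comp (Theta k)) = Submodule.map (Emap k) (range (Theta k)) :=
    LinearMap.range_comp _ _
  have hfr : finrank (ZMod 2) (Submodule.map (Emap k) (range (Theta k)))
      = finrank (ZMod 2) (range (Theta k)) := by
    have : (Eequiv k : ((CF k × CF k) × (CF k × CF k)) →ₗ[ZMod 2] CF (k+2)) = Emap k := rfl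
    rw [← this]
    exact LinearEquiv.finrank_map_eq (Eequiv k) (range (Theta k))
  have hth : finrank (ZMod 2) (range (Theta k))
      = (finrank (ZMod 2) (range (bdry k)) + finrank (ZMod 2) (range (bdry k)))
        + finrank (ZMod 2) (range (Kmap k)) := by
    rw [Theta, finrank_range_prodMap, finrank_range_prodMap]
  rw [hr1, hr2, hfr, hth, rank_K hk]
  omega

set_option maxHeartbeats 1000000 in
set_option synthInstance.maxHeartbeats 400000 in
lemma homDim_add (k : ℕ) (h : ∀ x, bdry k (bdry k x) = 0) :
    homDim k + 2 * finrank (ZMod 2) (range (bdry k)) = 2 ^ k := by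
  have hle : range (bdry k) ≤ ker (bdry k) := by
    rintro y ⟨x, rfl⟩
    exact LinearMap.mem_ker.mpr (h x)
  have e1 : finrank (ZMod 2)
      (Submodule.comap (ker (bdry k)).subtype (range (bdry k)))
      = finrank (ZMod 2) (range (bdry k)) :=
    (Submodule.comapSubtypeEquivOfLe hle).finrank_eq
  have e2 := Submodule.finrank_quotient_add_finrank
    (Submodule.comap (ker (bdry k)).subtype (range (bdry k)))
  have e3 := LinearMap.finrank_range_add_finrank_ker (bdry k)
  rw [finrank_CF] at e3
  unfold homDim
  omega

lemma homdim_rec (hk : Odd k) : homDim (k+2) = 2 * homDim k := by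
  have h1 := homDim_add k (bdry_sq hk)
  have h2' := homDim_add (k+2) (bdry_sq (by obtain ⟨m, hm⟩ := hk; exact ⟨m+1, by omega⟩))
  have h3 := rank_rec hk
  have hp : (2:ℕ) ^ (k+2) = 4 * 2 ^ k := by ring
  omega

lemma bdry_one : bdry 1 = 0 := by
  refine LinearMap.ext fun x => ?_
  funext ε
  rw [bdry_apply, Fin.sum_univ_one]
  have : sflip 0 ε = flipAll ε := by
    funext j
    rw [Fin.eq_zero j]
    show Function.update ε 0 (!ε 0) 0 = _
    rw [Function.update_self]
    rfl
  rw [this]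
  show _ = (0 : CF 1 →ₗ[ZMod 2] CF 1) x ε
  simp only [LinearMap.zero_apply, Pi.zero_apply]
  linear_combination (x (flipAll ε)) * h2

lemma homDim_one : homDim 1 = 2 := by
  have h0 : ∀ x, bdry 1 (bdry 1 x) = 0 := fun x => by rw [bdry_one]; simp
  have h := homDim_add 1 h0
  have hr : finrank (ZMod 2) (range (bdry 1)) = 0 := by
    rw [bdry_one, LinearMap.range_zero, finrank_bot]
  omega

lemma homDim_three : homDim 3 = 4 := by
  have h := homdim_rec (k := 1) odd_one
  rw [homDim_one] at h
  exact h

end Final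

theorem stmt8 :
    (∀ k : ℕ, Odd k → 3 ≤ k → homDim (k + 2) = 2 * homDim k) ∧
    homDim 3 = 4 ∧
    (∀ n : ℕ, 2 ≤ n → homDim (2 * n - 1) = 2 ^ n) := by
  refine ⟨fun k hk _ => homdim_rec hk, homDim_three, fun n hn => ?_⟩
  induction n, hn using Nat.le_induction with
  | base => exact homDim_three
  | succ n hn ih =>
    have e : 2 * (n + 1) - 1 = (2 * n - 1) + 2 := by omega
    have ho : Odd (2 * n - 1) := ⟨n - 1, by omega⟩
    rw [e, homdim_rec ho, ih, ← pow_succ']
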